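/- arXiv:2410.12658 — 8 statements merged into one kernel-verified Lean document; each statement's English description precedes it below -/
import Mathlib

section
/- Let n ≥ 2, d ≥ 1, let u : [n] → ℝ^d and c ∈ ℝ^d satisfy ⟪c, u_i⟫ < ⟪c, u_j⟫ for all i < j, and let ω ∈ ℝ^d be generic. Then for every i < n and every j with i < j < A^ω(i), one has τ^ω(i) < τ^ω(j). -/
open scoped RealInnerProductSpace

/-- The slope `ρ^ω(i,j)` of the edge from vertex `u i` to vertex `u j`,
with respect to the objective direction `c`. -/
noncomputable def rho {n d : ℕ} (u : Fin n → EuclideanSpace ℝ (Fin d))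
    (c ω : EuclideanSpace ℝ (Fin d)) (i j : Fin n) : ℝ :=
  ⟪ω, u j - u i⟫ / ⟪c, u j - u i⟫

/-- `τ^ω(i)`: the maximal slope from vertex `i` to a later vertex
(the supremum of the finite set of slopes `ρ^ω(i,j)` for `i < j`;
it is meaningful for non-maximal `i`, where this set is nonempty). -/
noncomputable def tau {n d : ℕ} (u : Fin n → EuclideanSpace ℝ (Fin d))
    (c ω : EuclideanSpace ℝ (Fin d)) (i : Fin n) : ℝ :=
  sSup {x : ℝ | ∃ j : Fin n, i < j ∧ x = rho u c ω i j}

/-- `ω` is generic: for each non-maximal vertex `i` there is a unique `j > i`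
whose slope attains the maximal slope `τ^ω(i)`. -/
def Generic {n d : ℕ} (u : Fin n → EuclideanSpace ℝ (Fin d))
    (c ω : EuclideanSpace ℝ (Fin d)) : Prop :=
  ∀ i : Fin n, (i : ℕ) + 1 < n →
    ∃! j : Fin n, i < j ∧ rho u c ω i j = tau u c ω i

/-- `A` is the max-slope arborescence `A^ω`: it fixes the maximal vertex, and
sends every other vertex `i` to an improving neighbour attaining `τ^ω(i)`. -/
def IsArbo {n d : ℕ} (u : Fin n → EuclideanSpace ℝ (Fin d))
    (c ω : EuclideanSpace ℝ (Fin d)) (A : Fin n → Fin n) : Prop :=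
  (∀ i : Fin n, (i : ℕ) + 1 = n → A i = i) ∧
  (∀ i : Fin n, (i : ℕ) + 1 < n →
    i < A i ∧ rho u c ω i (A i) = tau u c ω i)

lemma rho_le_tau {n d : ℕ} (u : Fin n → EuclideanSpace ℝ (Fin d))
    (c ω : EuclideanSpace ℝ (Fin d)) (i j : Fin n) (hij : i < j) :
    rho u c ω i j ≤ tau u c ω i := by
  apply le_csSup
  · exact Set.Finite.bddAbove (Set.Finite.subset (Set.finite_range (rho u c ω i))
      (fun x ⟨k, _, hk⟩ => ⟨k, hk.symm⟩))
  · exact ⟨j, hij, rfl⟩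

/-- for generic `ω`, if `i < j < A^ω(i)` then `τ^ω(i) < τ^ω(j)`. -/
theorem tau_lt_of_between (n d : ℕ) (hn : 2 ≤ n) (hd : 1 ≤ d)
    (u : Fin n → EuclideanSpace ℝ (Fin d)) (c : EuclideanSpace ℝ (Fin d))
    (hc : ∀ i j : Fin n, i < j → ⟪c, u i⟫ < ⟪c, u j⟫)
    (ω : EuclideanSpace ℝ (Fin d)) (hω : Generic u c ω)
    (A : Fin n → Fin n) (hA : IsArbo u c ω A)
    (i j : Fin n) (hi : (i : ℕ) + 1 < n) (hij : i < j) (hjA : j < A i) :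
    tau u c ω i < tau u c ω j := by
  obtain ⟨hik, hrk⟩ := hA.2 i hi
  set k := A i with hk
  have hjk : j < k := hjA
  -- positivity of denominators
  have hb : (0:ℝ) < ⟪c, u j - u i⟫ := by
    have := hc i j hij; rw [inner_sub_right]; linarith
  have hb' : (0:ℝ) < ⟪c, u k - u j⟫ := by
    have := hc j k hjk; rw [inner_sub_right]; linarith
  set a : ℝ := ⟪ω, u j - u i⟫ with ha
  set a' : ℝ := ⟪ω, u k - u j⟫ with ha'
  set b : ℝ := ⟪c, u j - u i⟫ with hbdef
  set b' : ℝ := ⟪c, u k - u j⟫ with hb'def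
  have hsum1 : ⟪ω, u k - u i⟫ = a + a' := by
    simp only [ha, ha', inner_sub_right]; ring
  have hsum2 : ⟪c, u k - u i⟫ = b + b' := by
    simp only [hbdef, hb'def, inner_sub_right]; ring
  have hrik : rho u c ω i k = (a + a') / (b + b') := by
    rw [rho, hsum1, hsum2]
  -- ρ(i,j) < ρ(i,k) by genericity
  have hle : rho u c ω i j ≤ tau u c ω i := rho_le_tau u c ω i j hij
  have hne : rho u c ω i j ≠ tau u c ω i := by
    intro h
    obtain ⟨m, _, huniq⟩ := hω i hi
    have h1 := huniq j ⟨hij, h⟩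
    have h2 := huniq k ⟨hik, hrk⟩
    exact absurd (h1.trans h2.symm) (ne_of_lt hjk)
  have hlt : a / b < (a + a') / (b + b') := by
    have := lt_of_le_of_ne hle hne
    rw [← hrk, hrik] at this
    exact this
  -- mediant inequality
  have hlt2 : (a + a') / (b + b') < a' / b' := by
    rw [div_lt_div_iff₀ (by linarith) hb'] ; rw [div_lt_div_iff₀ hb (by linarith)] at hlt
    nlinarith
  calc tau u c ω i = (a + a') / (b + b') := by rw [← hrk, hrik]
    _ < a' / b' := hlt2
    _ = rho u c ω j k := rfl
    _ ≤ tau u c ω j := rho_le_tau u c ω j k hjk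
end

section
/- Let n ≥ 2, d ≥ 1, let u : [n] → ℝ^d and c ∈ ℝ^d satisfy ⟪c, u_i⟫ < ⟪c, u_j⟫ for all i < j, and let ω ∈ ℝ^d be generic. Then for every i < n with A^ω(i) < n, one has τ^ω(A^ω(i)) < τ^ω(i). -/
open scoped RealInnerProductSpace

/-- for generic `ω`, if `i` and `A^ω(i)` are both non-maximal,
then `τ^ω(A^ω(i)) < τ^ω(i)`. -/
theorem tau_arbo_lt (n d : ℕ) (hn : 2 ≤ n) (hd : 1 ≤ d)
    (u : Fin n → EuclideanSpace ℝ (Fin d)) (c : EuclideanSpace ℝ (Fin d))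
    (hc : ∀ i j : Fin n, i < j → ⟪c, u i⟫ < ⟪c, u j⟫)
    (ω : EuclideanSpace ℝ (Fin d)) (hω : Generic u c ω)
    (A : Fin n → Fin n) (hA : IsArbo u c ω A)
    (i : Fin n) (hi : (i : ℕ) + 1 < n) (hAi : (A i : ℕ) + 1 < n) :
    tau u c ω (A i) < tau u c ω i := by
  obtain ⟨hfix, hmove⟩ := hA
  set k := A i with hk
  obtain ⟨hik, hρik⟩ := hmove i hi
  obtain ⟨hkj, hρkj⟩ := hmove k hAi
  set j := A k with hj
  have hij : i < j := lt_trans hik hkj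
  -- inner products
  have a_pos : (0:ℝ) < ⟪c, u k - u i⟫ := by
    rw [inner_sub_right]; linarith [hc i k hik]
  have b_pos : (0:ℝ) < ⟪c, u j - u k⟫ := by
    rw [inner_sub_right]; linarith [hc k j hkj]
  set p : ℝ := ⟪ω, u k - u i⟫ with hp
  set q : ℝ := ⟪ω, u j - u k⟫ with hq
  set a : ℝ := ⟪c, u k - u i⟫ with ha
  set b : ℝ := ⟪c, u j - u k⟫ with hb
  have hsplit : u j - u i = (u j - u k) + (u k - u i) := by abel
  have hcsum : ⟪c, u j - u i⟫ = b + a := by rw [hsplit, inner_add_right]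
  have hωsum : ⟪ω, u j - u i⟫ = q + p := by rw [hsplit, inner_add_right]
  have hρij : rho u c ω i j = (q + p) / (b + a) := by
    rw [rho, hcsum, hωsum]
  have hρik' : rho u c ω i k = p / a := rfl
  have hρkj' : rho u c ω k j = q / b := rfl
  -- τ i is an upper bound
  have hbdd : BddAbove {x : ℝ | ∃ j : Fin n, i < j ∧ x = rho u c ω i j} := by
    apply Set.Finite.bddAbove
    apply Set.Finite.subset (Set.finite_range (rho u c ω i))
    rintro x ⟨j', _, rfl⟩
    exact ⟨j', rfl⟩
  have hle : rho u c ω i j ≤ tau u c ω i :=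
    le_csSup hbdd ⟨j, hij, rfl⟩
  -- strict: rho i j ≠ tau i by genericity
  have hne : rho u c ω i j ≠ tau u c ω i := by
    intro h
    obtain ⟨j', _, huniq⟩ := hω i hi
    have h1 : j = j' := huniq j ⟨hij, h⟩
    have h2 : k = j' := huniq k ⟨hik, hρik⟩
    exact absurd (h1 ▸ h2 : k = j) (ne_of_lt hkj)
  have hlt : rho u c ω i j < tau u c ω i := lt_of_le_of_ne hle hne
  rw [← hρkj, ← hρik] at *
  rw [hρkj', hρik']
  rw [hρij, hρik'] at hlt
  rw [div_lt_div_iff₀ (by linarith) a_pos] at hlt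
  rw [div_lt_div_iff₀ b_pos a_pos]
  nlinarith
end

section
/- Let n ≥ 2, d ≥ 1, let u : [n] → ℝ^d and c ∈ ℝ^d satisfy ⟪c, u_i⟫ < ⟪c, u_j⟫ for all i < j, and let ω ∈ ℝ^d be generic. Then for every i < n, A^ω(i) = min( {j ∈ [n] : i < j < n and τ^ω(j) < τ^ω(i)} ∪ {n} ). (This is the formula A^ω(i) = min{j : i < j and τ^ω(i) > τ^ω(j)} with the convention τ^ω(n) = −∞.) -/
open scoped RealInnerProductSpace

section Aux
variable {n d : ℕ} (u : Fin n → EuclideanSpace ℝ (Fin d)) (c ω : EuclideanSpace ℝ (Fin d))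

lemma pos_den (hc : ∀ i j : Fin n, i < j → ⟪c, u i⟫ < ⟪c, u j⟫) {i j : Fin n} (h : i < j) :
    0 < ⟪c, u j - u i⟫ := by
  rw [inner_sub_right]; linarith [hc i j h]

lemma rho_convex (hc : ∀ i j : Fin n, i < j → ⟪c, u i⟫ < ⟪c, u j⟫)
    {i j k : Fin n} (hij : i < j) (hjk : j < k) :
    (⟪c, u j - u i⟫ + ⟪c, u k - u j⟫) * rho u c ω i k
      = ⟪c, u j - u i⟫ * rho u c ω i j + ⟪c, u k - u j⟫ * rho u c ω j k := by
  have ha := pos_den u c hc hij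
  have hb := pos_den u c hc hjk
  have hsum : ⟪c, u k - u i⟫ = ⟪c, u j - u i⟫ + ⟪c, u k - u j⟫ := by
    simp only [inner_sub_right]; ring
  have hωsum : ⟪ω, u k - u i⟫ = ⟪ω, u j - u i⟫ + ⟪ω, u k - u j⟫ := by
    simp only [inner_sub_right]; ring
  have key : ∀ x y : ℝ, y ≠ 0 → y * (x / y) = x := fun x y hy => by field_simp
  unfold rho
  rw [hsum, hωsum, key _ _ (by linarith), key _ _ ha.ne', key _ _ hb.ne']

lemma tau_spec {i : Fin n} (hi : (i : ℕ) + 1 < n) :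
    (∀ j, i < j → rho u c ω i j ≤ tau u c ω i) ∧
      ∃ j, i < j ∧ tau u c ω i = rho u c ω i j := by
  set S := {x : ℝ | ∃ j : Fin n, i < j ∧ x = rho u c ω i j} with hSdef
  have hS : S = (fun j => rho u c ω i j) '' {j | i < j} := by
    ext x; simp [hSdef, eq_comm]
  have hfin : S.Finite := by
    rw [hS]; exact (Set.finite_univ.subset (Set.subset_univ _)).image _
  have hne : S.Nonempty :=
    ⟨rho u c ω i ⟨i + 1, hi⟩, ⟨i + 1, hi⟩, by simp [Fin.lt_def], rfl⟩
  constructor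
  · intro j hj
    exact le_csSup hfin.bddAbove ⟨j, hj, rfl⟩
  · obtain ⟨j, hj, hx⟩ := hne.csSup_mem hfin
    exact ⟨j, hj, hx⟩

end Aux

/-- for generic `ω` and non-maximal `i`, `A^ω(i)` is the least
element of the set `{j | i < j, j non-maximal, τ^ω(j) < τ^ω(i)} ∪ {max vertex}`
(the convention `τ^ω(max) = -∞` makes the maximal vertex always a member). -/
theorem arbo_eq_min (n d : ℕ) (hn : 2 ≤ n) (hd : 1 ≤ d)
    (u : Fin n → EuclideanSpace ℝ (Fin d)) (c : EuclideanSpace ℝ (Fin d))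
    (hc : ∀ i j : Fin n, i < j → ⟪c, u i⟫ < ⟪c, u j⟫)
    (ω : EuclideanSpace ℝ (Fin d)) (hω : Generic u c ω)
    (A : Fin n → Fin n) (hA : IsArbo u c ω A)
    (i : Fin n) (hi : (i : ℕ) + 1 < n) :
    IsLeast {j : Fin n |
        (i < j ∧ (j : ℕ) + 1 < n ∧ tau u c ω j < tau u c ω i) ∨ (j : ℕ) + 1 = n}
      (A i) := by
  obtain ⟨him, hρ⟩ := hA.2 i hi
  have hub := (tau_spec u c ω hi).1
  have huniq := hω i hi
  have huni : ∀ j, i < j → rho u c ω i j = tau u c ω i → j = A i := by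
    intro j hj hjρ
    exact huniq.unique ⟨hj, hjρ⟩ ⟨him, hρ⟩
  constructor
  · by_cases hml : ((A i : ℕ)) + 1 = n
    · exact Or.inr hml
    · left
      have hml' : ((A i : ℕ)) + 1 < n :=
        Nat.lt_of_le_of_ne (Nat.succ_le_of_lt (A i).isLt) hml
      refine ⟨him, hml', ?_⟩
      obtain ⟨k, hmk, hτm⟩ := (tau_spec u c ω hml').2
      by_contra h
      push_neg at h
      have hik : i < k := him.trans hmk
      have hconv := rho_convex u c ω hc him hmk
      have ha := pos_den u c hc him
      have hb := pos_den u c hc hmk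
      have hrk : rho u c ω i k ≤ tau u c ω i := hub k hik
      have heq : rho u c ω i k = tau u c ω i := by nlinarith
      have := huni k hik heq
      exact absurd this.symm hmk.ne
  · rintro j (⟨hij, hjn, hτ⟩ | hjl)
    · by_contra hlt
      push_neg at hlt
      have hjm : j < A i := hlt
      have hs : rho u c ω i j < tau u c ω i := by
        refine lt_of_le_of_ne (hub j hij) (fun h => ?_)
        exact absurd (huni j hij h) hjm.ne
      have hconv := rho_convex u c ω hc hij hjm
      have ha := pos_den u c hc hij
      have hb := pos_den u c hc hjm
      have hjb := (tau_spec u c ω hjn).1 (A i) hjm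
      nlinarith
    · have h2 := (A i).isLt
      exact Fin.le_def.mpr (by omega)
end

section
/- Let m ≥ 1, let u : [m+1] → ℝ^m be affinely independent (a full-dimensional simplex in ℝ^m) and let c ∈ ℝ^m satisfy ⟪c, u_i⟫ < ⟪c, u_j⟫ for all i < j. Then the slope map θ : ℝ^m → ℝ^m, θ(ω) = (τ^ω(1), …, τ^ω(m)), is a continuous bijection from ℝ^m onto ℝ^m. -/
open scoped RealInnerProductSpace

/-- The slope map `θ : ℝ^m → ℝ^m`, sending `ω` to its slope vector
`(τ^ω(1), …, τ^ω(m))`. -/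
noncomputable def theta {m : ℕ} (u : Fin (m + 1) → EuclideanSpace ℝ (Fin m))
    (c : EuclideanSpace ℝ (Fin m)) (ω : EuclideanSpace ℝ (Fin m)) : Fin m → ℝ :=
  fun i => tau u c ω i.castSucc

/-! Put `g j = ⟪c, u j⟫`, which increases with `j`, and let `h j = ⟪ω, u j - u m⟫` be the
height of vertex `j` above the last one. Since the edge vectors `u j - u m` form a basis,
`ω ↦ h` is a linear isomorphism from `ℝ^m` onto the heights with `h m = 0`, and `τ^ω(i)` is
the largest slope `(h j - h i) / (g j - g i)` over `j > i`. Now `τ^ω(i) = t` says exactly that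
`h i = max_{j > i} (h j - t (g j - g i))`, so prescribing all the slopes determines the heights
one vertex at a time, from the last vertex downwards: `θ` is bijective. Each `τ^ω(i)` is a
maximum of finitely many linear functions of `ω`, so `θ` is continuous. -/

open Finset

theorem existsUnique_eq_apply_of_dependsOn_gt {α β : Type*} [Preorder α] [WellFoundedGT α]
    [Nonempty β] (F : α → (α → β) → β)
    (hF : ∀ i f f', (∀ j, i < j → f j = f' j) → F i f = F i f') :
    ∃! f : α → β, ∀ i, f i = F i f := by
  classical
  let f : α → β := WellFoundedGT.fix fun i rec =>
    F i fun j => if h : i < j then rec j h else Classical.arbitrary β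
  have hf : ∀ i, f i = F i f := fun i => by
    unfold f
    rw [WellFoundedGT.fix_eq]
    exact hF i _ _ fun j hj => dif_pos hj
  refine ⟨f, hf, fun f' hf' => funext fun i => ?_⟩
  induction i using WellFoundedGT.induction with
  | _ i ih => rw [hf' i, hf i]; exact hF i _ _ ih

theorem Finset.sup'_eq_iff {ι α : Type*} [LinearOrder α] {s : Finset ι} (hs : s.Nonempty)
    (f : ι → α) (a : α) : s.sup' hs f = a ↔ (∀ j ∈ s, f j ≤ a) ∧ ∃ j ∈ s, a ≤ f j := by
  rw [le_antisymm_iff, sup'_le_iff, le_sup'_iff]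

theorem Finset.sup'_sub_div_eq_iff {ι : Type*} {s : Finset ι} (hs : s.Nonempty) {a D : ι → ℝ}
    (hD : ∀ j ∈ s, 0 < D j) (x t : ℝ) :
    s.sup' hs (fun j => (a j - x) / D j) = t ↔ s.sup' hs (fun j => a j - t * D j) = x := by
  rw [sup'_eq_iff, sup'_eq_iff]
  refine and_congr (forall₂_congr fun j hj => ?_)
    (exists_congr fun j => and_congr_right fun hj => ?_)
  · rw [div_le_iff₀ (hD j hj)]; constructor <;> intro <;> linarith
  · rw [le_div_iff₀ (hD j hj)]; constructor <;> intro <;> linarith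

theorem Fin.nonempty_Ioi_castSucc {m : ℕ} (i : Fin m) : (Ioi i.castSucc).Nonempty :=
  ⟨Fin.last m, mem_Ioi.2 i.castSucc_lt_last⟩

/-- The maximal slopes `τ(0), …, τ(m-1)` of the heights `h` over the abscissae `g`, the last
vertex being put at height `0`. -/
noncomputable def slopeVector {m : ℕ} (g : Fin (m + 1) → ℝ) (h : Fin m → ℝ) : Fin m → ℝ :=
  fun i => (Ioi i.castSucc).sup' (Fin.nonempty_Ioi_castSucc i)
    fun j => ((Fin.snoc h 0 : Fin (m + 1) → ℝ) j - h i) / (g j - g i.castSucc)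

theorem slopeVector_apply_eq_iff {m : ℕ} {g : Fin (m + 1) → ℝ} (hg : StrictMono g)
    (h : Fin m → ℝ) (i : Fin m) (t : ℝ) :
    slopeVector g h i = t ↔
      h i = (Ioi i.castSucc).sup' (Fin.nonempty_Ioi_castSucc i)
        (fun j => (Fin.snoc h 0 : Fin (m + 1) → ℝ) j - t * (g j - g i.castSucc)) :=
  (Finset.sup'_sub_div_eq_iff _ (fun _ hj => sub_pos.2 (hg (mem_Ioi.1 hj))) _ _).trans eq_comm

theorem slopeVector_bijective {m : ℕ} {g : Fin (m + 1) → ℝ} (hg : StrictMono g) :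
    Function.Bijective (slopeVector g) := by
  rw [Function.bijective_iff_existsUnique]
  intro y
  simp only [funext_iff, slopeVector_apply_eq_iff hg]
  refine existsUnique_eq_apply_of_dependsOn_gt _ fun i h h' hagree =>
    sup'_congr _ rfl fun j hj => ?_
  induction j using Fin.lastCases with
  | last => simp only [Fin.snoc_last]
  | cast k => rw [Fin.snoc_castSucc, Fin.snoc_castSucc,
      hagree k (Fin.castSucc_lt_castSucc_iff.1 (mem_Ioi.1 hj))]

section EdgeHeights

variable {E : Type*} [NormedAddCommGroup E] [InnerProductSpace ℝ E] {m : ℕ}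

noncomputable def edgeHeights (u : Fin (m + 1) → E) : E →ₗ[ℝ] Fin m → ℝ :=
  LinearMap.pi fun j => innerₛₗ ℝ (u j.castSucc - u (Fin.last m))

theorem snoc_edgeHeights_apply (u : Fin (m + 1) → E) (ω : E) (j : Fin (m + 1)) :
    (Fin.snoc (edgeHeights u ω) 0 : Fin (m + 1) → ℝ) j = ⟪u j - u (Fin.last m), ω⟫ := by
  induction j using Fin.lastCases with
  | last => rw [Fin.snoc_last, sub_self, inner_zero_left]
  | cast k => rw [Fin.snoc_castSucc]; rfl

theorem edgeHeights_bijective [FiniteDimensional ℝ E] {u : Fin (m + 1) → E}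
    (hu : AffineIndependent ℝ u) (hE : Module.finrank ℝ E = m) :
    Function.Bijective (edgeHeights u) := by
  have hli : LinearIndependent ℝ fun j : Fin m => u j.castSucc - u (Fin.last m) := by
    have := ((affineIndependent_iff_linearIndependent_vsub ℝ u (Fin.last m)).1 hu).comp _
      (finSuccAboveEquiv (Fin.last m)).injective
    simpa [Function.comp_def, finSuccAboveEquiv_apply, Fin.succAbove_last] using this
  let b := Module.Basis.mk hli (hli.span_eq_top_of_card_eq_finrank' (by simp [hE])).ge
  have hinj : Function.Injective (edgeHeights u) := fun ω ω' h =>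
    InnerProductSpace.ext_inner_left_basis b fun j => by
      rw [Module.Basis.mk_apply]; exact congrFun h j
  exact ⟨hinj, (LinearMap.injective_iff_surjective_of_finrank_eq_finrank (by simp [hE])).1 hinj⟩

end EdgeHeights

section Simplex

variable {m : ℕ} (u : Fin (m + 1) → EuclideanSpace ℝ (Fin m)) (c : EuclideanSpace ℝ (Fin m))

theorem theta_apply_eq_sup' (ω : EuclideanSpace ℝ (Fin m)) (i : Fin m) :
    theta u c ω i =
      (Ioi i.castSucc).sup' (Fin.nonempty_Ioi_castSucc i) (rho u c ω i.castSucc) := by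
  rw [theta, tau, sup'_eq_csSup_image]
  congr 1
  ext x
  simp [eq_comm]

theorem continuous_theta : Continuous (theta u c) := by
  simp_rw [continuous_pi_iff, theta_apply_eq_sup']
  exact fun i => Continuous.finset_sup'_apply _ fun j _ =>
    (continuous_id.inner continuous_const).div_const _

theorem theta_eq_slopeVector_comp_edgeHeights :
    theta u c = slopeVector (fun j => ⟪c, u j⟫) ∘ edgeHeights u := by
  ext ω i
  rw [theta_apply_eq_sup', Function.comp_apply, slopeVector]
  refine sup'_congr _ rfl fun j _ => ?_
  have hi := snoc_edgeHeights_apply u ω i.castSucc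
  rw [Fin.snoc_castSucc] at hi
  rw [rho, inner_sub_right c, snoc_edgeHeights_apply, hi, ← inner_sub_left,
    sub_sub_sub_cancel_right, real_inner_comm]

end Simplex

theorem slope_map_continuous_bijective_general (m : ℕ)
    (u : Fin (m + 1) → EuclideanSpace ℝ (Fin m)) (hu : AffineIndependent ℝ u)
    (c : EuclideanSpace ℝ (Fin m))
    (hc : ∀ i j : Fin (m + 1), i < j → ⟪c, u i⟫ < ⟪c, u j⟫) :
    Continuous (theta u c) ∧ Function.Bijective (theta u c) := by
  refine ⟨continuous_theta u c, ?_⟩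
  rw [theta_eq_slopeVector_comp_edgeHeights]
  exact (slopeVector_bijective fun i j hij => hc i j hij).comp
    (edgeHeights_bijective hu finrank_euclideanSpace_fin)

/-- for a full-dimensional simplex, the slope map `θ` is a
continuous bijection from `ℝ^m` onto `ℝ^m`. -/
theorem slope_map_continuous_bijective (m : ℕ) (hm : 1 ≤ m)
    (u : Fin (m + 1) → EuclideanSpace ℝ (Fin m)) (hu : AffineIndependent ℝ u)
    (c : EuclideanSpace ℝ (Fin m))
    (hc : ∀ i j : Fin (m + 1), i < j → ⟪c, u i⟫ < ⟪c, u j⟫) :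
    Continuous (theta u c) ∧ Function.Bijective (theta u c) :=
  slope_map_continuous_bijective_general m u hu c hc
end

section
/- Let m ≥ 1, let u : [m+1] → ℝ^m be affinely independent (a full-dimensional simplex in ℝ^m) and let c ∈ ℝ^m satisfy ⟪c, u_i⟫ < ⟪c, u_j⟫ for all i < j. For every strongly generic ω ∈ ℝ^m, the image under the slope map θ of the set {ω′ ∈ ℝ^m : ω′ strongly generic and A^{ω′} = A^ω} equals the set of all x ∈ ℝ^m whose coordinates are pairwise distinct and whose sorting permutation σ (the permutation of [m] with x_{σ(1)} < ⋯ < x_{σ(m)}) satisfies σ ≡sylv π^ω. -/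
open scoped RealInnerProductSpace

/-- `ω` is strongly generic: it is generic and the slopes
`τ^ω(1), …, τ^ω(m)` at the `m` non-maximal vertices are pairwise distinct. -/
def StronglyGeneric {m d : ℕ} (u : Fin (m + 1) → EuclideanSpace ℝ (Fin d))
    (c ω : EuclideanSpace ℝ (Fin d)) : Prop :=
  Generic u c ω ∧ Function.Injective fun i : Fin m => tau u c ω i.castSucc

/-- One step of the sylvester rewriting rule on permutations of `[m]` (in
one-line notation): the letters at two consecutive positions `a, b = a+1`
may be exchanged whenever some letter strictly between them in value appears
at an earlier position (`U j V i k W ≡ U j V k i W` for letters `i < j < k`). -/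
def SylvRel (m : ℕ) (π π' : Equiv.Perm (Fin m)) : Prop :=
  ∃ a b : Fin m, (a : ℕ) + 1 = (b : ℕ) ∧ π' = π * Equiv.swap a b ∧
    ∃ e : Fin m, e < a ∧ min (π a) (π b) < π e ∧ π e < max (π a) (π b)

/-- The sylvester congruence: the equivalence relation on permutations of `[m]`
generated by the sylvester rewriting rule. -/
def Sylv (m : ℕ) : Equiv.Perm (Fin m) → Equiv.Perm (Fin m) → Prop :=
  Relation.EqvGen (SylvRel m)

/-!
With `h = ⟪c, u ·⟫` and `g = ⟪ω, u ·⟫`, the slope `ρ^ω(i,j)` is that of the segment between the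
planar points `(h i, g i)` and `(h j, g j)`, so for `i < j < k` the slope `ρ(i,k)` is a strict
convex combination of `ρ(i,j)` and `ρ(j,k)`. Hence every `ω` in the fiber of the arborescence `A`
satisfies `τ(p) < τ(q)` whenever `q` lies strictly between `p` and `A p` or `p = A q`, and `A` is
non-crossing. Conversely, affine independence lets us prescribe `g` freely; taking for `g` the
potential along `A` with slope `x p` on every edge `p → A p` realizes any `x` satisfying these
inequalities, because non-crossing makes each edge the unique steepest one from its tail. So the
image consists of the injective `x` whose sorting permutation is a linear extension of these
inequalities, and the linear extensions form one sylvester class: a sylvester move preserves them,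
and two linear extensions are joined by swaps of adjacent incomparable letters, each of which is a
sylvester move.
-/

/-- The inequalities `τ p < τ q` forced on the fiber of `A`: `q` lies strictly between `p` and its
parent `A p`, or `p` is the parent of `q`. A letter `p : Fin m` stands for the vertex
`p.castSucc`. -/
def ArboRel {m : ℕ} (A : Fin (m + 1) → Fin (m + 1)) (p q : Fin m) : Prop :=
  p < q ∧ q.castSucc < A p.castSucc ∨ p.castSucc = A q.castSucc

/-- A permutation `σ` in one-line notation is a linear extension of `ArboRel A` iff
`ArboMono A σ.symm`. -/
def ArboMono {m : ℕ} {α : Type*} [Preorder α] (A : Fin (m + 1) → Fin (m + 1))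
    (x : Fin m → α) : Prop :=
  ∀ ⦃p q : Fin m⦄, ArboRel A p q → x p < x q

section Sylvester

open Equiv

variable {m : ℕ} {A : Fin (m + 1) → Fin (m + 1)}

theorem arboMono_iff_of_strictMono {α : Type*} [LinearOrder α] {x : Fin m → α} {σ : Perm (Fin m)}
    (hσ : StrictMono fun q => x (σ q)) : ArboMono A x ↔ ArboMono A σ.symm := by
  simp only [ArboMono, ← hσ.lt_iff_lt, apply_symm_apply]

theorem ArboMono.lt_of_min_lt_of_lt_max (hA : ∀ p : Fin m, p.castSucc < A p.castSucc) {α : Type*}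
    [Preorder α] {x : Fin m → α} (hx : ArboMono A x) {p q j : Fin m} (hpq : ArboRel A p q)
    (h₁ : min p q < j) (h₂ : j < max p q) : x p < x j := by
  have hq := hA q
  rw [min_lt_iff] at h₁
  rw [lt_max_iff] at h₂
  simp only [Fin.lt_def, Fin.val_castSucc] at h₁ h₂ hq
  rcases hpq with ⟨hpq, hqA⟩ | hpA
  · refine hx (Or.inl ⟨?_, ?_⟩) <;> simp only [Fin.lt_def, Fin.val_castSucc] at * <;> omega
  · rw [Fin.ext_iff, Fin.val_castSucc] at hpA
    refine (hx (Or.inr (Fin.ext_iff.2 hpA))).trans (hx (Or.inl ⟨?_, ?_⟩)) <;>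
      simp only [Fin.lt_def, Fin.val_castSucc] <;> omega

theorem exists_arboRel_of_not_arboRel (hA : ∀ p : Fin m, p.castSucc < A p.castSucc) {p q : Fin m}
    (hpq : p < q) (h₁ : ¬ArboRel A p q) (h₂ : ¬ArboRel A q p) :
    ∃ j, p < j ∧ j < q ∧ ArboRel A j p := by
  have hAq : A p.castSucc < q.castSucc := by
    by_contra! h
    rcases h.lt_or_eq with h | h
    · exact h₁ (Or.inl ⟨hpq, h⟩)
    · exact h₂ (Or.inr h)
  have hp := hA p
  simp only [Fin.lt_def, Fin.val_castSucc] at hAq hp hpq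
  refine ⟨(A p.castSucc).castLT (by omega), ?_, ?_, Or.inr (Fin.castSucc_castLT _ _)⟩ <;>
    simp only [Fin.lt_def, Fin.val_castLT] <;> omega

theorem SylvRel.symm {σ σ' : Perm (Fin m)} (h : SylvRel m σ σ') : SylvRel m σ' σ := by
  obtain ⟨a, b, hab, rfl, e, hea, h₁, h₂⟩ := h
  have hswap : swap a b e = e := swap_apply_of_ne_of_ne (by fin_omega) (by fin_omega)
  refine ⟨a, b, hab, by simp [mul_assoc], e, hea, ?_, ?_⟩ <;>
    simp only [Perm.mul_apply, swap_apply_left, swap_apply_right, hswap]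
  · rwa [min_comm]
  · rwa [max_comm]

theorem swap_apply_lt_swap_apply {a b P Q : Fin m} (hab : (a : ℕ) + 1 = b) (hPQ : P < Q)
    (hne : ¬(P = a ∧ Q = b)) : swap a b P < swap a b Q := by
  simp only [swap_apply_def]
  split_ifs <;> fin_omega

variable (hA : ∀ p : Fin m, p.castSucc < A p.castSucc)
include hA

theorem SylvRel.arboMono_symm {σ σ' : Perm (Fin m)} (h : SylvRel m σ σ')
    (hσ : ArboMono A σ.symm) : ArboMono A σ'.symm := by
  obtain ⟨a, b, hab, rfl, e, hea, h₁, h₂⟩ := h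
  intro p q hpq
  simp only [Perm.mul_def, symm_trans_apply, symm_swap]
  refine swap_apply_lt_swap_apply hab (hσ hpq) fun ⟨hpa, hqb⟩ => ?_
  rw [symm_apply_eq] at hpa hqb
  subst hpa hqb
  have hae := hσ.lt_of_min_lt_of_lt_max hA hpq h₁ h₂
  simp only [symm_apply_apply] at hae
  exact lt_asymm hae hea

theorem Sylv.arboMono_symm_iff {σ σ' : Perm (Fin m)} (h : Sylv m σ σ') :
    ArboMono A σ.symm ↔ ArboMono A σ'.symm := by
  let r : Perm (Fin m) → Perm (Fin m) → Prop := fun τ τ' => ArboMono A τ.symm ↔ ArboMono A τ'.symm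
  have hrel : SylvRel m ≤ r := fun _ _ h => ⟨h.arboMono_symm hA, h.symm.arboMono_symm hA⟩
  exact (Equivalence.eqvGen_iff (r := r) ⟨fun _ => Iff.rfl, Iff.symm, Iff.trans⟩).1
    (Relation.EqvGen.mono hrel _ _ h)

end Sylvester

section Connectivity

open Equiv

variable {m : ℕ}

def discordantPairs (σ σ' : Perm (Fin m)) : Finset (Fin m × Fin m) :=
  Finset.univ.filter fun pq => σ.symm pq.1 < σ.symm pq.2 ∧ σ'.symm pq.2 < σ'.symm pq.1

theorem exists_adjacent_inversion {σ σ' : Perm (Fin m)} (h : σ ≠ σ') :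
    ∃ a b : Fin m, (a : ℕ) + 1 = b ∧ σ'.symm (σ b) < σ'.symm (σ a) := by
  by_contra! hle
  have hmono : StrictMono fun a => σ'.symm (σ a) := by
    cases m with
    | zero => exact fun a => a.elim0
    | succ n =>
      refine Fin.strictMono_iff_lt_succ.2 fun a => (hle _ _ rfl).lt_of_ne ?_
      simp [Fin.ext_iff]
  refine h (Equiv.ext fun a => ?_)
  rw [← symm_apply_eq]
  exact congrFun hmono.eq_id a

theorem mem_discordantPairs {σ σ' : Perm (Fin m)} {pq : Fin m × Fin m} :
    pq ∈ discordantPairs σ σ' ↔ σ.symm pq.1 < σ.symm pq.2 ∧ σ'.symm pq.2 < σ'.symm pq.1 := by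
  simp [discordantPairs]

theorem discordantPairs_mul_swap_ssubset {σ σ' : Perm (Fin m)} {a b : Fin m}
    (hab : (a : ℕ) + 1 = b) (hinv : σ'.symm (σ b) < σ'.symm (σ a)) :
    discordantPairs (σ * swap a b) σ' ⊂ discordantPairs σ σ' := by
  have hba : ¬b < a := by fin_omega
  refine (Finset.ssubset_iff_of_subset fun pq hpq => ?_).2 ⟨(σ a, σ b), ?_, ?_⟩
  · simp only [mem_discordantPairs, Perm.mul_def, symm_trans_apply, symm_swap] at hpq ⊢
    refine ⟨?_, hpq.2⟩
    by_contra! hqp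
    rcases hqp.lt_or_eq with hqp | hqp
    · by_cases hqa : σ.symm pq.2 = a ∧ σ.symm pq.1 = b
      · rw [symm_apply_eq, symm_apply_eq] at hqa
        rw [hqa.1, hqa.2] at hpq
        exact lt_asymm hinv hpq.2
      · exact lt_asymm hpq.1 (swap_apply_lt_swap_apply hab hqp hqa)
    · simp [hqp] at hpq
  · simp [mem_discordantPairs, hinv, Fin.lt_def, ← hab]
  · simp [mem_discordantPairs, Perm.mul_def, hba]

variable {A : Fin (m + 1) → Fin (m + 1)} (hA : ∀ p : Fin m, p.castSucc < A p.castSucc)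
include hA

theorem sylvRel_mul_swap {σ σ' : Perm (Fin m)} (hσ : ArboMono A σ.symm)
    (hσ' : ArboMono A σ'.symm) {a b : Fin m} (hab : (a : ℕ) + 1 = b)
    (hinv : σ'.symm (σ b) < σ'.symm (σ a)) : SylvRel m σ (σ * swap a b) := by
  have hab' : a < b := by fin_omega
  have h₁ : ¬ArboRel A (σ a) (σ b) := fun h => lt_asymm hinv (hσ' h)
  have h₂ : ¬ArboRel A (σ b) (σ a) := fun h => by simpa [lt_asymm hab'] using hσ h
  refine ⟨a, b, hab, rfl, ?_⟩
  rcases lt_or_gt_of_ne (σ.injective.ne hab'.ne) with hlt | hlt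
  · obtain ⟨j, hj₁, hj₂, hj⟩ := exists_arboRel_of_not_arboRel hA hlt h₁ h₂
    refine ⟨σ.symm j, by simpa using hσ hj, ?_, ?_⟩ <;>
      simp [min_eq_left hlt.le, max_eq_right hlt.le, hj₁, hj₂]
  · obtain ⟨j, hj₁, hj₂, hj⟩ := exists_arboRel_of_not_arboRel hA hlt h₂ h₁
    have hjb : σ.symm j < b := by simpa using hσ hj
    have hja : σ.symm j ≠ a := fun h => by simp [← h] at hj₂
    refine ⟨σ.symm j, by fin_omega, ?_, ?_⟩ <;>
      simp [min_eq_right hlt.le, max_eq_left hlt.le, hj₁, hj₂]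

theorem sylv_of_arboMono {σ σ' : Perm (Fin m)} (hσ : ArboMono A σ.symm)
    (hσ' : ArboMono A σ'.symm) : Sylv m σ σ' := by
  induction hn : (discordantPairs σ σ').card using Nat.strong_induction_on generalizing σ with
  | _ n ih =>
    by_cases h : σ = σ'
    · exact h ▸ .refl σ
    obtain ⟨a, b, hab, hinv⟩ := exists_adjacent_inversion h
    have hrel := sylvRel_mul_swap hA hσ hσ' hab hinv
    exact .trans _ _ _ (.rel _ _ hrel) (ih _ (hn ▸ Finset.card_lt_card
      (discordantPairs_mul_swap_ssubset hab hinv)) (hrel.arboMono_symm hA hσ) rfl)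

end Connectivity

section Slopes

variable {m d : ℕ} {u : Fin (m + 1) → EuclideanSpace ℝ (Fin d)} {c ω : EuclideanSpace ℝ (Fin d)}

local notation "ρ" => rho u c ω
local notation "τ" => tau u c ω

theorem rho_mul_sub (hc : StrictMono fun i => ⟪c, u i⟫) {i j : Fin (m + 1)} (hij : i < j) :
    ρ i j * (⟪c, u j⟫ - ⟪c, u i⟫) = ⟪ω, u j⟫ - ⟪ω, u i⟫ := by
  rw [rho, inner_sub_right, inner_sub_right, div_mul_cancel₀ _ (sub_pos.2 (hc hij)).ne']

/-- Three-slope lemma: `ρ(i,k)` is a strict convex combination of `ρ(i,j)` and `ρ(j,k)`. -/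
theorem rho_lt_rho_iff (hc : StrictMono fun i => ⟪c, u i⟫) {i j k : Fin (m + 1)} (hij : i < j)
    (hjk : j < k) : ρ i j < ρ i k ↔ ρ i k < ρ j k := by
  have hp := sub_pos.2 (hc hij)
  have hq := sub_pos.2 (hc hjk)
  have key : (ρ i k - ρ i j) * (⟪c, u j⟫ - ⟪c, u i⟫) =
      (ρ j k - ρ i k) * (⟪c, u k⟫ - ⟪c, u j⟫) := by
    linear_combination (rho_mul_sub (ω := ω) hc (hij.trans hjk)) - rho_mul_sub hc hij -
      rho_mul_sub hc hjk
  rw [← sub_pos, ← mul_pos_iff_of_pos_right hp, key, mul_pos_iff_of_pos_right hq, sub_pos]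

theorem rho_le_tau_s11 {i j : Fin (m + 1)} (hij : i < j) : ρ i j ≤ τ i :=
  le_csSup ((Set.finite_range (ρ i)).subset (by rintro _ ⟨j, -, rfl⟩; exact ⟨j, rfl⟩)).bddAbove
    ⟨j, hij, rfl⟩

variable {A : Fin (m + 1) → Fin (m + 1)}

theorem IsArbo.castSucc_lt (hA : IsArbo u c ω A) (p : Fin m) : p.castSucc < A p.castSucc :=
  (hA.2 _ (by simp)).1

theorem IsArbo.rho_eq_tau (hA : IsArbo u c ω A) (p : Fin m) :
    ρ p.castSucc (A p.castSucc) = τ p.castSucc :=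
  (hA.2 _ (by simp)).2

theorem Generic.rho_lt_tau (hg : Generic u c ω) (hA : IsArbo u c ω A) {p : Fin m}
    {j : Fin (m + 1)} (hpj : p.castSucc < j) (hj : j ≠ A p.castSucc) :
    ρ p.castSucc j < τ p.castSucc :=
  (rho_le_tau_s11 hpj).lt_of_ne fun h => hj <| (hg p.castSucc (by simp)).unique
    (show _ ∧ _ from ⟨hpj, h⟩) (show _ ∧ _ from ⟨hA.castSucc_lt p, hA.rho_eq_tau p⟩)

theorem generic_isArbo_of_rho_lt {x : Fin m → ℝ}
    (hA₀ : ∀ i : Fin (m + 1), (i : ℕ) + 1 = m + 1 → A i = i)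
    (hA : ∀ p : Fin m, p.castSucc < A p.castSucc)
    (hAx : ∀ p, ρ p.castSucc (A p.castSucc) = x p)
    (hlt : ∀ p j, p.castSucc < j → j ≠ A p.castSucc → ρ p.castSucc j < x p) :
    Generic u c ω ∧ IsArbo u c ω A ∧ ∀ p, τ p.castSucc = x p := by
  have htau : ∀ p, τ p.castSucc = x p := fun p => by
    refine IsGreatest.csSup_eq ⟨⟨A p.castSucc, hA p, (hAx p).symm⟩, ?_⟩
    rintro _ ⟨j, hj, rfl⟩
    rcases eq_or_ne j (A p.castSucc) with rfl | hne
    · exact (hAx p).le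
    · exact (hlt p j hj hne).le
  have hletter : ∀ i : Fin (m + 1), (i : ℕ) + 1 < m + 1 → ∃ p : Fin m, p.castSucc = i :=
    fun i hi => ⟨i.castLT (by omega), Fin.castSucc_castLT _ _⟩
  refine ⟨fun i hi => ?_, ⟨hA₀, fun i hi => ?_⟩, htau⟩
  · obtain ⟨p, rfl⟩ := hletter i hi
    refine ⟨A p.castSucc, ⟨hA p, by rw [hAx, htau]⟩, fun j ⟨hj, hρ⟩ => ?_⟩
    by_contra hne
    exact (hlt p j hj hne).ne (hρ.trans (htau p))
  · obtain ⟨p, rfl⟩ := hletter i hi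
    exact ⟨hA p, by rw [hAx, htau]⟩

variable (hc : StrictMono fun i => ⟪c, u i⟫) (hg : Generic u c ω) (hA : IsArbo u c ω A)
include hc hg hA

theorem IsArbo.apply_le_apply_of_lt_of_lt_apply {p q : Fin m} (hpq : p < q)
    (hqA : q.castSucc < A p.castSucc) : A q.castSucc ≤ A p.castSucc := by
  by_contra! hAA
  -- then `ρ(A p, A q) ≤ ρ(p, A q) ≤ τ p < ρ(q, A p) ≤ τ q < ρ(A p, A q)`
  have hpq' : p.castSucc < q.castSucc := Fin.castSucc_lt_castSucc_iff.2 hpq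
  have hpA := hA.castSucc_lt p
  have hp := hA.rho_eq_tau p
  have hq := hA.rho_eq_tau q
  have hpAq : ρ p.castSucc (A q.castSucc) ≤ τ p.castSucc := rho_le_tau_s11 (hpA.trans hAA)
  have hqAp : ρ q.castSucc (A p.castSucc) ≤ τ q.castSucc := rho_le_tau_s11 hqA
  have h₁ := (rho_lt_rho_iff hc hpq' hqA).1 (hp ▸ hg.rho_lt_tau hA hpq' hqA.ne)
  have h₂ := (rho_lt_rho_iff hc hqA hAA).1 (hq ▸ hg.rho_lt_tau hA hqA hAA.ne)
  have h₃ := not_lt.1 <| (rho_lt_rho_iff hc hpA hAA).not.1 (hp ▸ hpAq).not_gt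
  linarith

theorem IsArbo.arboMono_tau : ArboMono A fun p => τ p.castSucc := by
  rintro p q (⟨hpq, hqA⟩ | hpA)
  · have hpq' : p.castSucc < q.castSucc := Fin.castSucc_lt_castSucc_iff.2 hpq
    calc τ p.castSucc = ρ p.castSucc (A p.castSucc) := (hA.rho_eq_tau p).symm
      _ < ρ q.castSucc (A p.castSucc) :=
        (rho_lt_rho_iff hc hpq' hqA).1 (hA.rho_eq_tau p ▸ hg.rho_lt_tau hA hpq' hqA.ne)
      _ ≤ τ q.castSucc := rho_le_tau_s11 hqA
  · have hqp : q.castSucc < p.castSucc := hpA ▸ hA.castSucc_lt q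
    have hpA' := hA.castSucc_lt p
    have hlt : ρ q.castSucc (A p.castSucc) < τ q.castSucc :=
      hg.rho_lt_tau hA (hqp.trans hpA') (hpA ▸ hpA'.ne')
    have hqp' : ρ q.castSucc p.castSucc = τ q.castSucc := by rw [hpA]; exact hA.rho_eq_tau q
    calc τ p.castSucc = ρ p.castSucc (A p.castSucc) := (hA.rho_eq_tau p).symm
      _ ≤ ρ q.castSucc (A p.castSucc) :=
        not_lt.1 <| (rho_lt_rho_iff hc hqp hpA').not.1 (hqp' ▸ hlt.le.not_gt)
      _ < τ q.castSucc := hlt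

end Slopes

section Realization

noncomputable def treePotential {n : ℕ} (A : Fin n → Fin n) (w : Fin n → ℝ) (i : Fin n) : ℝ :=
  if i < A i then treePotential A w (A i) - w i else 0
termination_by n - i
decreasing_by fin_omega

theorem treePotential_sub {n : ℕ} {A : Fin n → Fin n} (w : Fin n → ℝ) {i : Fin n} (hi : i < A i) :
    treePotential A w (A i) - treePotential A w i = w i := by
  rw [treePotential.eq_def A w i, if_pos hi]
  ring

variable {m : ℕ} {A : Fin (m + 1) → Fin (m + 1)} {h g : Fin (m + 1) → ℝ} {x : Fin m → ℝ}
  (hh : StrictMono h) (hA : ∀ p : Fin m, p.castSucc < A p.castSucc)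
  (hg : ∀ p : Fin m, g (A p.castSucc) - g p.castSucc = x p * (h (A p.castSucc) - h p.castSucc))
include hh hA hg

theorem mul_sub_lt_sub_of_forall_lt (v : ℝ) {p : Fin m} {t : Fin (m + 1)} (hpt : p.castSucc < t)
    (hv : ∀ k : Fin m, p ≤ k → k.castSucc < t → A k.castSucc ≤ t ∧ v < x k) :
    v * (h t - h p.castSucc) < g t - g p.castSucc := by
  induction hd : (t : ℕ) - p using Nat.strong_induction_on generalizing p with
  | _ d ih =>
    obtain ⟨hAt, hvp⟩ := hv p le_rfl hpt
    have hedge : v * (h (A p.castSucc) - h p.castSucc) < g (A p.castSucc) - g p.castSucc := by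
      rw [hg]; exact mul_lt_mul_of_pos_right hvp (sub_pos.2 (hh (hA p)))
    rcases hAt.lt_or_eq with hlt | heq
    · set k : Fin m := (A p.castSucc).castLT (by fin_omega)
      have hk : k.castSucc = A p.castSucc := Fin.castSucc_castLT _ _
      have hpk : p < k := Fin.castSucc_lt_castSucc_iff.1 (hk ▸ hA p)
      have hkt : k.castSucc < t := by rwa [hk]
      have hkt := ih (t - k) (by rw [Fin.lt_def, Fin.val_castSucc] at hkt; fin_omega) hkt
        (fun j hkj hjt => hv j (hpk.le.trans hkj) hjt) rfl
      rw [hk] at hkt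
      linarith
    · rwa [← heq]

theorem sub_lt_mul_sub_of_ne
    (hNC : ∀ p q : Fin m, p < q → q.castSucc < A p.castSucc → A q.castSucc ≤ A p.castSucc)
    (hx : ArboMono A x) (p : Fin m) {j : Fin (m + 1)} (hpj : p.castSucc < j)
    (hj : j ≠ A p.castSucc) : g j - g p.castSucc < x p * (h j - h p.castSucc) := by
  induction hd : m - (p : ℕ) using Nat.strong_induction_on generalizing p j with
  | _ d ih =>
    have hpA := hA p
    have hgp := hg p
    rcases lt_or_gt_of_ne hj with hjA | hAj
    · set k : Fin m := j.castLT (by fin_omega)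
      have hk : k.castSucc = j := Fin.castSucc_castLT _ _
      have hpk : p < k := Fin.castSucc_lt_castSucc_iff.1 (hk ▸ hpj)
      have hlow := mul_sub_lt_sub_of_forall_lt hh hA hg (x p) (p := k) (t := A p.castSucc)
        (by rwa [hk]) fun l hkl hlA =>
          ⟨hNC p l (hpk.trans_le hkl) hlA, hx (Or.inl ⟨hpk.trans_le hkl, hlA⟩)⟩
      rw [hk] at hlow
      linarith
    · set k : Fin m := (A p.castSucc).castLT (by fin_omega)
      have hk : k.castSucc = A p.castSucc := Fin.castSucc_castLT _ _
      have hkj : k.castSucc < j := by rwa [hk]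
      have hle : g j - g k.castSucc ≤ x k * (h j - h k.castSucc) := by
        by_cases hjk : j = A k.castSucc
        · rw [hjk, hg]
        · refine (ih _ ?_ k hkj hjk rfl).le
          have := Fin.castSucc_lt_castSucc_iff.1 (hk ▸ hpA)
          fin_omega
      have hxk := mul_lt_mul_of_pos_right (hx (Or.inr hk) : x k < x p) (sub_pos.2 (hh hkj))
      rw [hk] at hle hxk
      linarith

end Realization

theorem AffineIndependent.exists_inner_sub_eq {E ι : Type*} [NormedAddCommGroup E]
    [InnerProductSpace ℝ E] [FiniteDimensional ℝ E] [Fintype ι] {u : ι → E}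
    (hu : AffineIndependent ℝ u) (hcard : Fintype.card ι = Module.finrank ℝ E + 1) (g : ι → ℝ) :
    ∃ ω : E, ∀ i j, ⟪ω, u j - u i⟫ = g j - g i := by
  classical
  let b : AffineBasis ι ℝ E := ⟨u, hu, hu.affineSpan_eq_top_iff_card_eq_finrank_add_one.2 hcard⟩
  have hb : ∀ k, b.coords (u k) = Pi.single k 1 := fun k => by
    ext l
    exact (b.coords_apply (b k) l).trans (by simp [b.coord_apply, Pi.single_apply, eq_comm])
  let ℓ := Fintype.linearCombination ℝ g ∘ₗ b.coords.linear
  refine ⟨(InnerProductSpace.toDual ℝ _).symm (LinearMap.toContinuousLinearMap ℓ), fun i j => ?_⟩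
  rw [InnerProductSpace.toDual_symm_apply, LinearMap.coe_toContinuousLinearMap',
    LinearMap.comp_apply, ← vsub_eq_sub, AffineMap.linearMap_vsub, hb, hb]
  simp [Fintype.linearCombination_apply, Pi.single_apply, sub_mul, Finset.sum_sub_distrib]

theorem IsArbo.exists_isArbo_tau_eq {m : ℕ} {u : Fin (m + 1) → EuclideanSpace ℝ (Fin m)}
    {c ω : EuclideanSpace ℝ (Fin m)} {A : Fin (m + 1) → Fin (m + 1)} (hu : AffineIndependent ℝ u)
    (hc : StrictMono fun i => ⟪c, u i⟫) (hg : Generic u c ω) (hA : IsArbo u c ω A)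
    {x : Fin m → ℝ} (hx : ArboMono A x) :
    ∃ ω', Generic u c ω' ∧ IsArbo u c ω' A ∧ ∀ p, tau u c ω' p.castSucc = x p := by
  set h := fun i => ⟪c, u i⟫
  set g := treePotential A (Fin.snoc (fun p => x p * (h (A p.castSucc) - h p.castSucc)) 0)
  have hgA : ∀ p : Fin m,
      g (A p.castSucc) - g p.castSucc = x p * (h (A p.castSucc) - h p.castSucc) := fun p => by
    rw [treePotential_sub _ (hA.castSucc_lt p), Fin.snoc_castSucc]
  obtain ⟨ω', hω'⟩ := hu.exists_inner_sub_eq (by simp) g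
  have hrho : ∀ i j, rho u c ω' i j = (g j - g i) / (h j - h i) := fun i j => by
    rw [rho, hω', inner_sub_right]
  refine ⟨ω', generic_isArbo_of_rho_lt hA.1 hA.castSucc_lt (fun p => ?_) (fun p j hpj hj => ?_)⟩
  · rw [hrho, hgA, mul_div_cancel_right₀ _ (sub_pos.2 (hc (hA.castSucc_lt p))).ne']
  · rw [hrho, div_lt_iff₀ (sub_pos.2 (hc hpj))]
    exact sub_lt_mul_sub_of_ne hc hA.castSucc_lt hgA
      (fun p q hpq hqA => hA.apply_le_apply_of_lt_of_lt_apply hc hg hpq hqA) hx p hpj hj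

theorem slope_map_image_of_fiber_general (m : ℕ)
    (u : Fin (m + 1) → EuclideanSpace ℝ (Fin m)) (hu : AffineIndependent ℝ u)
    (c : EuclideanSpace ℝ (Fin m))
    (hc : ∀ i j : Fin (m + 1), i < j → ⟪c, u i⟫ < ⟪c, u j⟫)
    (ω : EuclideanSpace ℝ (Fin m)) (hω : StronglyGeneric u c ω)
    (A : Fin (m + 1) → Fin (m + 1)) (hA : IsArbo u c ω A)
    (π : Equiv.Perm (Fin m))
    (hπ : StrictMono fun q : Fin m => tau u c ω ((π q).castSucc)) :
    theta u c '' {ω' : EuclideanSpace ℝ (Fin m) |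
        StronglyGeneric u c ω' ∧ IsArbo u c ω' A} =
      {x : Fin m → ℝ | Function.Injective x ∧
        ∀ σ : Equiv.Perm (Fin m), (StrictMono fun q : Fin m => x (σ q)) →
          Sylv m σ π} := by
  have hπA : ArboMono A π.symm := (arboMono_iff_of_strictMono hπ).1 (hA.arboMono_tau hc hω.1)
  ext x
  constructor
  · rintro ⟨ω', ⟨hω', hA'⟩, rfl⟩
    exact ⟨hω'.2, fun σ hσ => sylv_of_arboMono hA.castSucc_lt
      ((arboMono_iff_of_strictMono hσ).1 (hA'.arboMono_tau hc hω'.1)) hπA⟩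
  · rintro ⟨hx, hsylv⟩
    have hσ : StrictMono fun q => x (Tuple.sort x q) :=
      (Tuple.monotone_sort x).strictMono_of_injective (hx.comp (Tuple.sort x).injective)
    have hxA : ArboMono A x := (arboMono_iff_of_strictMono hσ).2
      (((hsylv _ hσ).arboMono_symm_iff hA.castSucc_lt).2 hπA)
    obtain ⟨ω', hg', hA', hτ⟩ := hA.exists_isArbo_tau_eq hu hc hω.1 hxA
    have hθ : theta u c ω' = x := funext hτ
    exact ⟨ω', ⟨⟨hg', show Function.Injective (theta u c ω') from hθ ▸ hx⟩, hA'⟩, hθ⟩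

/-- the slope map sends the (strongly generic part of the) fiber
of the arborescence `A^ω` onto the open cone of the sylvester fan consisting of
the points whose sorting permutation is sylvester congruent to `π^ω`. -/
theorem slope_map_image_of_fiber (m : ℕ) (hm : 1 ≤ m)
    (u : Fin (m + 1) → EuclideanSpace ℝ (Fin m)) (hu : AffineIndependent ℝ u)
    (c : EuclideanSpace ℝ (Fin m))
    (hc : ∀ i j : Fin (m + 1), i < j → ⟪c, u i⟫ < ⟪c, u j⟫)
    (ω : EuclideanSpace ℝ (Fin m)) (hω : StronglyGeneric u c ω)
    (A : Fin (m + 1) → Fin (m + 1)) (hA : IsArbo u c ω A)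
    (π : Equiv.Perm (Fin m))
    (hπ : StrictMono fun q : Fin m => tau u c ω ((π q).castSucc)) :
    theta u c '' {ω' : EuclideanSpace ℝ (Fin m) |
        StronglyGeneric u c ω' ∧ IsArbo u c ω' A} =
      {x : Fin m → ℝ | Function.Injective x ∧
        ∀ σ : Equiv.Perm (Fin m), (StrictMono fun q : Fin m => x (σ q)) →
          Sylv m σ π} :=
  slope_map_image_of_fiber_general m u hu c hc ω hω A hA π hπ
end

section
/- In the product setting, let ω = (ω_1, …, ω_t) be generic for the product. Then each ω_s is generic for its factor, and for every vertex (i_1, …, i_t) other than the top vertex there is a unique r ∈ [t] with i_r < n_r such that τ^{ω_r}(i_r) > τ^{ω_s}(i_s) for every s ≠ r with i_s < n_s, and the arborescence satisfies A^ω(i_1, …, i_t) = (i_1, …, i_{r−1}, A^{ω_r}(i_r), i_{r+1}, …, i_t). -/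
open scoped RealInnerProductSpace

/-- The top vertex `(n_1, …, n_t)` of the product polytope. -/
def topVertex {t : ℕ} (m : Fin t → ℕ) : ∀ s : Fin t, Fin (m s + 1) :=
  fun s => Fin.last (m s)

/-- The maximal slope at a vertex `v` of the product polytope: the supremum of
the slopes to improving neighbours, i.e. of the `ρ^{ω_s}(v_s, j)` for `j > v_s`
(a finite set, nonempty when `v` is not the top vertex). -/
noncomputable def prodTau {t : ℕ} {m d : Fin t → ℕ}
    (u : ∀ s : Fin t, Fin (m s + 1) → EuclideanSpace ℝ (Fin (d s)))
    (c ω : ∀ s : Fin t, EuclideanSpace ℝ (Fin (d s)))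
    (v : ∀ s : Fin t, Fin (m s + 1)) : ℝ :=
  sSup {x : ℝ | ∃ s : Fin t, ∃ j : Fin (m s + 1),
    v s < j ∧ x = rho (u s) (c s) (ω s) (v s) j}

/-- `ω` is generic for the product: at each vertex other than the top vertex,
the maximal slope is attained by a unique improving neighbour (encoded by the
coordinate `s` that moves and its new value `j`). -/
def ProdGeneric {t : ℕ} {m d : Fin t → ℕ}
    (u : ∀ s : Fin t, Fin (m s + 1) → EuclideanSpace ℝ (Fin (d s)))
    (c ω : ∀ s : Fin t, EuclideanSpace ℝ (Fin (d s))) : Prop :=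
  ∀ v : ∀ s : Fin t, Fin (m s + 1), v ≠ topVertex m →
    ∃! p : (s : Fin t) × Fin (m s + 1),
      v p.1 < p.2 ∧ rho (u p.1) (c p.1) (ω p.1) (v p.1) p.2 = prodTau u c ω v

/-- `A` is the max-slope arborescence `A^ω` of the product: it fixes the top
vertex, and sends every other vertex `v` to an improving neighbour (differing
from `v` in a single, increased, coordinate) attaining the maximal slope. -/
def ProdIsArbo {t : ℕ} {m d : Fin t → ℕ}
    (u : ∀ s : Fin t, Fin (m s + 1) → EuclideanSpace ℝ (Fin (d s)))
    (c ω : ∀ s : Fin t, EuclideanSpace ℝ (Fin (d s)))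
    (A : (∀ s : Fin t, Fin (m s + 1)) → ∀ s : Fin t, Fin (m s + 1)) : Prop :=
  A (topVertex m) = topVertex m ∧
  ∀ v : ∀ s : Fin t, Fin (m s + 1), v ≠ topVertex m → ∃ s : Fin t,
    v s < A v s ∧ (∀ r : Fin t, r ≠ s → A v r = v r) ∧
    rho (u s) (c s) (ω s) (v s) (A v s) = prodTau u c ω v

section Aux

variable {n dd : ℕ} (u : Fin n → EuclideanSpace ℝ (Fin dd))
    (c ω : EuclideanSpace ℝ (Fin dd))

lemma slopeSet_finite (i : Fin n) :
    {x : ℝ | ∃ j : Fin n, i < j ∧ x = rho u c ω i j}.Finite := by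
  apply (Set.finite_range (fun j : Fin n => rho u c ω i j)).subset
  rintro x ⟨j, _, rfl⟩; exact ⟨j, rfl⟩

lemma le_tau (i j : Fin n) (hij : i < j) : rho u c ω i j ≤ tau u c ω i :=
  le_csSup (slopeSet_finite u c ω i).bddAbove ⟨j, hij, rfl⟩

lemma tau_mem (i : Fin n) (h : (i : ℕ) + 1 < n) :
    ∃ j : Fin n, i < j ∧ rho u c ω i j = tau u c ω i := by
  have hne : {x : ℝ | ∃ j : Fin n, i < j ∧ x = rho u c ω i j}.Nonempty :=
    ⟨rho u c ω i ⟨(i : ℕ) + 1, h⟩, ⟨(i : ℕ) + 1, h⟩, by simp [Fin.lt_def], rfl⟩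
  obtain ⟨j, hj, hx⟩ := hne.csSup_mem (slopeSet_finite u c ω i)
  exact ⟨j, hj, hx.symm⟩

end Aux

section ProdAux

variable {t : ℕ} {m d : Fin t → ℕ}
    (u : ∀ s : Fin t, Fin (m s + 1) → EuclideanSpace ℝ (Fin (d s)))
    (c ω : ∀ s : Fin t, EuclideanSpace ℝ (Fin (d s)))
    (v : ∀ s : Fin t, Fin (m s + 1))

lemma prodSlopeSet_finite :
    {x : ℝ | ∃ s : Fin t, ∃ j : Fin (m s + 1),
      v s < j ∧ x = rho (u s) (c s) (ω s) (v s) j}.Finite := by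
  apply (Set.finite_range (fun p : (s : Fin t) × Fin (m s + 1) =>
    rho (u p.1) (c p.1) (ω p.1) (v p.1) p.2)).subset
  rintro x ⟨s, j, _, rfl⟩; exact ⟨⟨s, j⟩, rfl⟩

lemma le_prodTau (s : Fin t) (j : Fin (m s + 1)) (hj : v s < j) :
    rho (u s) (c s) (ω s) (v s) j ≤ prodTau u c ω v :=
  le_csSup (prodSlopeSet_finite u c ω v).bddAbove ⟨s, j, hj, rfl⟩

lemma exists_lt_last (hv : v ≠ topVertex m) : ∃ s : Fin t, v s < Fin.last (m s) := by
  by_contra h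
  push_neg at h
  exact hv (funext fun s => le_antisymm (Fin.le_last _) (h s))

lemma prodTau_mem (hv : v ≠ topVertex m) :
    ∃ s : Fin t, ∃ j : Fin (m s + 1),
      v s < j ∧ rho (u s) (c s) (ω s) (v s) j = prodTau u c ω v := by
  obtain ⟨s, hs⟩ := exists_lt_last v hv
  have hne : {x : ℝ | ∃ s : Fin t, ∃ j : Fin (m s + 1),
      v s < j ∧ x = rho (u s) (c s) (ω s) (v s) j}.Nonempty :=
    ⟨rho (u s) (c s) (ω s) (v s) (Fin.last (m s)), s, Fin.last (m s), hs, rfl⟩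
  obtain ⟨s, j, hj, hx⟩ := hne.csSup_mem (prodSlopeSet_finite u c ω v)
  exact ⟨s, j, hj, hx.symm⟩

end ProdAux

/-- if `ω` is generic for the product then each `ω_s` is generic
for its factor and, at every non-top vertex `v`, there is a unique coordinate
`r` (with `v_r` non-maximal) whose slope `τ^{ω_r}(v_r)` dominates all the
others, and the product arborescence moves exactly the coordinate `r`, to
`A^{ω_r}(v_r)`. -/
theorem prod_arbo_formula (t : ℕ) (ht : 1 ≤ t) (m d : Fin t → ℕ)
    (hm : ∀ s : Fin t, 1 ≤ m s) (hd : ∀ s : Fin t, 1 ≤ d s)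
    (u : ∀ s : Fin t, Fin (m s + 1) → EuclideanSpace ℝ (Fin (d s)))
    (c : ∀ s : Fin t, EuclideanSpace ℝ (Fin (d s)))
    (hc : ∀ s : Fin t, ∀ i j : Fin (m s + 1), i < j → ⟪c s, u s i⟫ < ⟪c s, u s j⟫)
    (ω : ∀ s : Fin t, EuclideanSpace ℝ (Fin (d s))) (hω : ProdGeneric u c ω)
    (A : (∀ s : Fin t, Fin (m s + 1)) → ∀ s : Fin t, Fin (m s + 1))
    (hA : ProdIsArbo u c ω A) :
    (∀ s : Fin t, Generic (u s) (c s) (ω s)) ∧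
    ∀ B : ∀ s : Fin t, Fin (m s + 1) → Fin (m s + 1),
      (∀ s : Fin t, IsArbo (u s) (c s) (ω s) (B s)) →
      ∀ v : ∀ s : Fin t, Fin (m s + 1), v ≠ topVertex m →
        (∃! r : Fin t, v r ≠ Fin.last (m r) ∧
          ∀ s : Fin t, s ≠ r → v s ≠ Fin.last (m s) →
            tau (u s) (c s) (ω s) (v s) < tau (u r) (c r) (ω r) (v r)) ∧
        (∀ r : Fin t,
          (v r ≠ Fin.last (m r) ∧
            ∀ s : Fin t, s ≠ r → v s ≠ Fin.last (m s) →
              tau (u s) (c s) (ω s) (v s) < tau (u r) (c r) (ω r) (v r)) →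
          A v r = B r (v r) ∧ ∀ s : Fin t, s ≠ r → A v s = v s) := by
  -- helper: non-maximal coordinates
  have hne_lt : ∀ {k : ℕ} (i : Fin (k + 1)), i ≠ Fin.last k → (i : ℕ) + 1 < k + 1 := by
    intro k i hi
    have : i < Fin.last k := lt_of_le_of_ne (Fin.le_last _) hi
    simpa using Nat.succ_lt_succ (Fin.lt_def.mp this)
  -- factor genericity
  have hgen : ∀ s : Fin t, Generic (u s) (c s) (ω s) := by
    intro s i hi
    set v : ∀ r : Fin t, Fin (m r + 1) := Function.update (topVertex m) s i with hvdef
    have hvs : v s = i := by simp [hvdef]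
    have hvr : ∀ r, r ≠ s → v r = Fin.last (m r) := fun r hr => by
      simp [hvdef, topVertex, Function.update_of_ne hr]
    have hil : i ≠ Fin.last (m s) := by
      intro h
      rw [h] at hi
      simp at hi
    have hvtop : v ≠ topVertex m := by
      intro h
      exact hil (hvs ▸ congrFun h s)
    obtain ⟨⟨s₀, j₀⟩, hp, huniq⟩ := hω v hvtop
    obtain ⟨hlt₀, hρ₀⟩ := hp
    have hs₀ : s₀ = s := by
      by_contra h
      rw [hvr s₀ h] at hlt₀
      exact absurd hlt₀ (not_lt.mpr (Fin.le_last _))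
    subst hs₀
    rw [hvs] at hlt₀ hρ₀
    have htau : prodTau u c ω v = tau (u s₀) (c s₀) (ω s₀) i := by
      apply le_antisymm
      · rw [← hρ₀]
        exact le_tau _ _ _ _ _ hlt₀
      · obtain ⟨j, hj, hjρ⟩ := tau_mem (u s₀) (c s₀) (ω s₀) i hi
        rw [← hjρ]
        have := le_prodTau u c ω v s₀ j (by rw [hvs]; exact hj)
        rwa [hvs] at this
    refine ⟨j₀, ⟨hlt₀, by rw [hρ₀, htau]⟩, ?_⟩
    rintro j' ⟨hj', hρ'⟩
    have hpq : (⟨s₀, j'⟩ : (r : Fin t) × Fin (m r + 1)) = ⟨s₀, j₀⟩ := by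
      apply huniq
      refine ⟨by rw [hvs]; exact hj', ?_⟩
      show rho (u s₀) (c s₀) (ω s₀) (v s₀) j' = prodTau u c ω v
      rw [hvs, hρ', htau]
    exact eq_of_heq (Sigma.mk.inj_iff.mp hpq).2
  refine ⟨hgen, ?_⟩
  intro B hB v hvtop
  obtain ⟨⟨s₀, j₀⟩, hp, huniq⟩ := hω v hvtop
  obtain ⟨hlt₀, hρ₀⟩ := hp
  have hvs₀ : v s₀ ≠ Fin.last (m s₀) :=
    ne_of_lt (lt_of_lt_of_le hlt₀ (Fin.le_last _))
  have hvs₀' : (v s₀ : ℕ) + 1 < m s₀ + 1 := hne_lt _ hvs₀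
  have htauτ : prodTau u c ω v = tau (u s₀) (c s₀) (ω s₀) (v s₀) := by
    apply le_antisymm
    · rw [← hρ₀]
      exact le_tau _ _ _ _ _ hlt₀
    · obtain ⟨j, hj, hjρ⟩ := tau_mem _ _ _ _ hvs₀'
      rw [← hjρ]
      exact le_prodTau u c ω v s₀ j hj
  have hle_all : ∀ s : Fin t, v s ≠ Fin.last (m s) →
      tau (u s) (c s) (ω s) (v s) ≤ prodTau u c ω v := by
    intro s hs
    obtain ⟨j, hj, hjρ⟩ := tau_mem (u s) (c s) (ω s) (v s) (hne_lt _ hs)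
    rw [← hjρ]
    exact le_prodTau u c ω v s j hj
  have hdom : ∀ s : Fin t, s ≠ s₀ → v s ≠ Fin.last (m s) →
      tau (u s) (c s) (ω s) (v s) < tau (u s₀) (c s₀) (ω s₀) (v s₀) := by
    intro s hs hvsl
    obtain ⟨j, hj, hjρ⟩ := tau_mem (u s) (c s) (ω s) (v s) (hne_lt _ hvsl)
    have hle : tau (u s) (c s) (ω s) (v s) ≤ prodTau u c ω v := hle_all s hvsl
    rcases lt_or_eq_of_le hle with h | h
    · rwa [htauτ] at h
    · exfalso
      have hpq : (⟨s, j⟩ : (r : Fin t) × Fin (m r + 1)) = ⟨s₀, j₀⟩ :=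
        huniq ⟨s, j⟩ ⟨hj, by rw [hjρ, h]⟩
      exact hs (congrArg Sigma.fst hpq)
  have hP : ∀ r : Fin t, (v r ≠ Fin.last (m r) ∧
      ∀ s : Fin t, s ≠ r → v s ≠ Fin.last (m s) →
        tau (u s) (c s) (ω s) (v s) < tau (u r) (c r) (ω r) (v r)) → r = s₀ := by
    rintro r ⟨hr1, hr2⟩
    by_contra h
    have h1 := hr2 s₀ (fun e => h e.symm) hvs₀
    have h2 : tau (u r) (c r) (ω r) (v r) ≤ tau (u s₀) (c s₀) (ω s₀) (v s₀) :=
      htauτ ▸ hle_all r hr1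
    exact absurd (h1.trans_le h2) (lt_irrefl _)
  constructor
  · exact ⟨s₀, ⟨hvs₀, hdom⟩, hP⟩
  · intro r hr
    have hrs : r = s₀ := hP r hr
    obtain ⟨s₁, hlt₁, hfix₁, hρ₁⟩ := hA.2 v hvtop
    have heq : (⟨s₁, A v s₁⟩ : (r : Fin t) × Fin (m r + 1)) = ⟨s₀, j₀⟩ :=
      huniq ⟨s₁, A v s₁⟩ ⟨hlt₁, hρ₁⟩
    obtain ⟨hs₁, hj₁⟩ := Sigma.mk.inj_iff.mp heq
    subst hs₁
    subst hrs
    have hAj : A v r = j₀ := eq_of_heq hj₁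
    constructor
    · obtain ⟨jstar, hjstar, hujs⟩ := hgen r (v r) hvs₀'
      have h1 : j₀ = jstar := hujs j₀ ⟨hlt₀, hρ₀.trans htauτ⟩
      have h2 : B r (v r) = jstar := hujs _ ((hB r).2 (v r) hvs₀')
      rw [hAj, h1, h2]
    · intro s hs
      exact hfix₁ s hs
end

section
/- In the product setting, if ω = (ω_1, …, ω_t) and ω′ = (ω′_1, …, ω′_t) are both generic for the product and A^ω = A^{ω′}, then A^{ω_s} = A^{ω′_s} for every s ∈ [t]. -/
open scoped RealInnerProductSpace

lemma factor_key {t : ℕ} {m d : Fin t → ℕ}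
    (u : ∀ s : Fin t, Fin (m s + 1) → EuclideanSpace ℝ (Fin (d s)))
    (c ω : ∀ s : Fin t, EuclideanSpace ℝ (Fin (d s)))
    (hω : ProdGeneric u c ω)
    (A : (∀ s : Fin t, Fin (m s + 1)) → ∀ s : Fin t, Fin (m s + 1))
    (hA : ProdIsArbo u c ω A)
    (s : Fin t) (B : Fin (m s + 1) → Fin (m s + 1))
    (hB : IsArbo (u s) (c s) (ω s) B)
    (i : Fin (m s + 1)) (hi : (i : ℕ) + 1 < m s + 1) :
    B i = A (Function.update (topVertex m) s i) s := by
  set v : ∀ r : Fin t, Fin (m r + 1) := Function.update (topVertex m) s i with hv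
  have hvs : v s = i := by simp [hv]
  have hvr : ∀ r : Fin t, r ≠ s → v r = Fin.last (m r) :=
    fun r hr => by simp [hv, Function.update_of_ne hr, topVertex]
  have hvtop : v ≠ topVertex m := by
    intro h
    have h2 : v s = topVertex m s := congrFun h s
    rw [hvs] at h2
    have : (i : ℕ) = m s := congrArg Fin.val h2
    omega
  have htau : prodTau u c ω v = tau (u s) (c s) (ω s) i := by
    unfold prodTau tau
    congr 1
    ext x
    constructor
    · rintro ⟨s', j, hj, rfl⟩
      by_cases hs' : s' = s
      · subst hs'
        exact ⟨j, hvs ▸ hj, by rw [hvs]⟩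
      · rw [hvr s' hs'] at hj
        exact absurd hj (Fin.le_last j).not_gt
    · rintro ⟨j, hj, rfl⟩
      exact ⟨s, j, by rw [hvs]; exact hj, by rw [hvs]⟩
  obtain ⟨s', hlt, hother, hrho⟩ := hA.2 v hvtop
  have hss : s' = s := by
    by_contra hne
    rw [hvr s' hne] at hlt
    exact (Fin.le_last (A v s')).not_gt hlt
  subst hss
  obtain ⟨p, hp, hpuniq⟩ := hω v hvtop
  have h1 : (⟨s', A v s'⟩ : (r : Fin t) × Fin (m r + 1)) = p :=
    hpuniq ⟨s', A v s'⟩ ⟨hlt, hrho⟩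
  have h2 : (⟨s', B i⟩ : (r : Fin t) × Fin (m r + 1)) = p := by
    refine hpuniq ⟨s', B i⟩ ⟨?_, ?_⟩
    · rw [hvs]; exact (hB.2 i hi).1
    · rw [hvs, htau]; exact (hB.2 i hi).2
  have h3 := h2.trans h1.symm
  exact eq_of_heq (Sigma.mk.inj_iff.mp h3).2

/-- if two weights generic for the product have the same product
arborescence, then they have the same arborescence on each factor. -/
theorem prod_arbo_determines_factor_arbos (t : ℕ) (ht : 1 ≤ t) (m d : Fin t → ℕ)
    (hm : ∀ s : Fin t, 1 ≤ m s) (hd : ∀ s : Fin t, 1 ≤ d s)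
    (u : ∀ s : Fin t, Fin (m s + 1) → EuclideanSpace ℝ (Fin (d s)))
    (c : ∀ s : Fin t, EuclideanSpace ℝ (Fin (d s)))
    (hc : ∀ s : Fin t, ∀ i j : Fin (m s + 1), i < j → ⟪c s, u s i⟫ < ⟪c s, u s j⟫)
    (ω ω' : ∀ s : Fin t, EuclideanSpace ℝ (Fin (d s)))
    (hω : ProdGeneric u c ω) (hω' : ProdGeneric u c ω')
    (A : (∀ s : Fin t, Fin (m s + 1)) → ∀ s : Fin t, Fin (m s + 1))
    (hA : ProdIsArbo u c ω A) (hA' : ProdIsArbo u c ω' A) :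
    ∀ s : Fin t, ∀ B B' : Fin (m s + 1) → Fin (m s + 1),
      IsArbo (u s) (c s) (ω s) B → IsArbo (u s) (c s) (ω' s) B' → B = B' := by
  intro s B B' hB hB'
  funext i
  by_cases hi : (i : ℕ) + 1 < m s + 1
  · rw [factor_key u c ω hω A hA s B hB i hi,
      factor_key u c ω' hω' A hA' s B' hB' i hi]
  · have hlast : (i : ℕ) + 1 = m s + 1 := by omega
    rw [hB.1 i hlast, hB'.1 i hlast]
end

section
/- In the product setting with each factor a full-dimensional simplex (d_s = m_s and u^s : [m_s+1] → ℝ^{m_s} affinely independent for every s ∈ [t]), if ω and ω′ are generic for the product, A^ω = A^{ω′}, and Θ(ω) = Θ(ω′), then ω = ω′. (The product slope map Θ is injective on each fiber of ω ↦ A^ω.) -/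
open scoped RealInnerProductSpace

/-- The product slope map `Θ`, sending `ω = (ω_1, …, ω_t)` to the concatenation
of the slope vectors of its factors: its coordinates are indexed by the
disjoint union `Σ s, [m_s]`, ordered lexicographically (which is the canonical
order-isomorphism with `[m]`, `m = m_1 + ⋯ + m_t`, identifying `(s, i)` with
`M_{s-1} + i`). -/
noncomputable def prodTheta {t : ℕ} {m d : Fin t → ℕ}
    (u : ∀ s : Fin t, Fin (m s + 1) → EuclideanSpace ℝ (Fin (d s)))
    (c : ∀ s : Fin t, EuclideanSpace ℝ (Fin (d s)))
    (ω : ∀ s : Fin t, EuclideanSpace ℝ (Fin (d s))) :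
    Lex ((s : Fin t) × Fin (m s)) → ℝ :=
  fun q => tau (u (ofLex q).1) (c (ofLex q).1) (ω (ofLex q).1)
    (Fin.castSucc (ofLex q).2)

/-- `ω` is strongly generic for the product: it is generic for the product and
the `m = m_1 + ⋯ + m_t` coordinates of `Θ(ω)` are pairwise distinct. -/
def ProdStronglyGeneric {t : ℕ} {m d : Fin t → ℕ}
    (u : ∀ s : Fin t, Fin (m s + 1) → EuclideanSpace ℝ (Fin (d s)))
    (c ω : ∀ s : Fin t, EuclideanSpace ℝ (Fin (d s))) : Prop :=
  ProdGeneric u c ω ∧ Function.Injective (prodTheta u c ω)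

/-- One step of the `(m_1, …, m_t)`-sylvester rewriting rule on permutations of
`[m] ≅ Σₗ s, [m_s]` (in one-line notation): the letters at two consecutive
positions `a ⋖ b` may be exchanged whenever they lie in the same block `s` and
some letter strictly between them in value appears at an earlier position
(`U j V i k W ≡ U j V k i W` for letters `i < j < k` with `i, k` — hence `j` —
in the same block). -/
def SylvRelT {t : ℕ} {m : Fin t → ℕ}
    (π π' : Equiv.Perm (Lex ((s : Fin t) × Fin (m s)))) : Prop :=
  ∃ a b : Lex ((s : Fin t) × Fin (m s)), a ⋖ b ∧ π' = π * Equiv.swap a b ∧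
    (ofLex (π a)).1 = (ofLex (π b)).1 ∧
    ∃ e : Lex ((s : Fin t) × Fin (m s)),
      e < a ∧ min (π a) (π b) < π e ∧ π e < max (π a) (π b)

/-- The `(m_1, …, m_t)`-sylvester congruence: the equivalence relation
generated by the `(m_1, …, m_t)`-sylvester rewriting rule. -/
def SylvT {t : ℕ} {m : Fin t → ℕ} :
    Equiv.Perm (Lex ((s : Fin t) × Fin (m s))) →
      Equiv.Perm (Lex ((s : Fin t) × Fin (m s))) → Prop :=
  Relation.EqvGen SylvRelT

/-!
Fix a factor `s` and a vertex `i ≠ n_s` of it. At the product vertex that agrees with the top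
vertex except for `i` in coordinate `s`, every improving neighbour moves coordinate `s`, so the
maximal slope there is `τ^{ω_s}(i)` and `A` moves `i` to some `j > i` with
`ρ^{ω_s}(i,j) = τ^{ω_s}(i)`. As `Θ(ω) = Θ(ω')` and `A^ω = A^{ω'}`, also
`ρ^{ω_s}(i,j) = ρ^{ω'_s}(i,j)`, i.e. `⟪ω_s - ω'_s, u^s_i⟫ = ⟪ω_s - ω'_s, u^s_j⟫`. Following
`A` up to `n_s` shows that `⟪ω_s - ω'_s, ·⟫` is constant on the vertices of the simplex, which
span `ℝ^{m_s}` affinely, so `ω_s = ω'_s`.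
-/

open Function

theorem AffineIndependent.eq_zero_of_inner_eq {ι E : Type*} [Fintype ι]
    [NormedAddCommGroup E] [InnerProductSpace ℝ E] [FiniteDimensional ℝ E]
    {u : ι → E} (hu : AffineIndependent ℝ u) (hcard : Fintype.card ι = Module.finrank ℝ E + 1)
    {δ : E} (h : ∀ i j, ⟪δ, u i⟫ = ⟪δ, u j⟫) : δ = 0 := by
  have hspan : vectorSpan ℝ (Set.range u) = ⊤ :=
    AffineSubspace.vectorSpan_eq_top_of_affineSpan_eq_top ℝ E E
      (hu.affineSpan_eq_top_iff_card_eq_finrank_add_one.mpr hcard)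
  have hker : vectorSpan ℝ (Set.range u) ≤ LinearMap.ker (innerₛₗ ℝ δ) := by
    rw [vectorSpan_def, Submodule.span_le]
    rintro _ ⟨_, ⟨i, rfl⟩, _, ⟨j, rfl⟩, rfl⟩
    simp [inner_sub_right, h i j]
  rw [hspan, top_le_iff, LinearMap.ker_eq_top] at hker
  simpa using LinearMap.congr_fun hker δ

theorem inner_sub_eq_of_rho_eq {n d : ℕ} {u : Fin n → EuclideanSpace ℝ (Fin d)}
    {c ω ω' : EuclideanSpace ℝ (Fin d)} {i j : Fin n} (hc : ⟪c, u i⟫ ≠ ⟪c, u j⟫)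
    (h : rho u c ω i j = rho u c ω' i j) : ⟪ω - ω', u i⟫ = ⟪ω - ω', u j⟫ := by
  have hc' : ⟪c, u j - u i⟫ ≠ 0 := by rwa [inner_sub_right, sub_ne_zero, ne_comm]
  rw [rho, rho, div_left_inj' hc'] at h
  rw [eq_comm, ← sub_eq_zero, ← inner_sub_right, inner_sub_left, h, sub_self]

section Product

variable {t : ℕ} {m d : Fin t → ℕ}
  {u : ∀ s : Fin t, Fin (m s + 1) → EuclideanSpace ℝ (Fin (d s))}
  {c ω : ∀ s : Fin t, EuclideanSpace ℝ (Fin (d s))}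

theorem update_topVertex_ne_topVertex {s : Fin t} {i : Fin (m s + 1)}
    (hi : i ≠ Fin.last (m s)) :
    update (topVertex m) s i ≠ topVertex m :=
  fun h => hi (by simpa [topVertex] using congrFun h s)

theorem eq_of_lt_update_topVertex {s r : Fin t} {i : Fin (m s + 1)} {j : Fin (m r + 1)}
    (h : update (topVertex m) s i r < j) : r = s := by
  by_contra hrs
  rw [update_of_ne hrs] at h
  exact (Fin.le_last j).not_gt h

theorem prodTau_update_topVertex (s : Fin t) (i : Fin (m s + 1)) :
    prodTau u c ω (update (topVertex m) s i) = tau (u s) (c s) (ω s) i := by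
  unfold prodTau tau
  congr 1
  ext x
  constructor
  · rintro ⟨r, j, hj, rfl⟩
    obtain rfl := eq_of_lt_update_topVertex hj
    exact ⟨j, by simpa using hj, by simp⟩
  · rintro ⟨j, hj, rfl⟩
    exact ⟨s, j, by simpa using hj, by simp⟩

theorem ProdIsArbo.rho_update_topVertex
    {A : (∀ s : Fin t, Fin (m s + 1)) → ∀ s : Fin t, Fin (m s + 1)} (hA : ProdIsArbo u c ω A)
    {s : Fin t} {i : Fin (m s + 1)} (hi : i ≠ Fin.last (m s)) :
    i < A (update (topVertex m) s i) s ∧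
      rho (u s) (c s) (ω s) i (A (update (topVertex m) s i) s) = tau (u s) (c s) (ω s) i := by
  obtain ⟨r, hlt, -, hrho⟩ := hA.2 _ (update_topVertex_ne_topVertex hi)
  obtain rfl := eq_of_lt_update_topVertex hlt
  simp only [update_self] at hlt hrho
  exact ⟨hlt, hrho.trans (prodTau_update_topVertex r i)⟩

end Product

theorem prod_slope_map_injective_on_fiber_general (t : ℕ) (m : Fin t → ℕ)
    (u : ∀ s : Fin t, Fin (m s + 1) → EuclideanSpace ℝ (Fin (m s)))
    (hu : ∀ s : Fin t, AffineIndependent ℝ (u s))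
    (c : ∀ s : Fin t, EuclideanSpace ℝ (Fin (m s)))
    (hc : ∀ s : Fin t, ∀ i j : Fin (m s + 1), i < j → ⟪c s, u s i⟫ < ⟪c s, u s j⟫)
    (ω ω' : ∀ s : Fin t, EuclideanSpace ℝ (Fin (m s)))
    (A : (∀ s : Fin t, Fin (m s + 1)) → ∀ s : Fin t, Fin (m s + 1))
    (hA : ProdIsArbo u c ω A) (hA' : ProdIsArbo u c ω' A)
    (hΘ : prodTheta u c ω = prodTheta u c ω') :
    ω = ω' := by
  funext s
  rw [← sub_eq_zero]
  refine (hu s).eq_zero_of_inner_eq (by simp) fun i j => ?_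
  suffices key : ∀ k, ⟪ω s - ω' s, u s k⟫ = ⟪ω s - ω' s, u s ⊤⟫ by rw [key i, key j]
  intro k
  refine WellFoundedGT.induction_top ⟨k, rfl⟩ fun l hl hkl => ?_
  obtain ⟨hll', hρ⟩ := hA.rho_update_topVertex hl
  obtain ⟨-, hρ'⟩ := hA'.rho_update_topVertex hl
  have hτ : tau (u s) (c s) (ω s) l = tau (u s) (c s) (ω' s) l := by
    simpa [prodTheta, Fin.castSucc_castPred l hl] using congrFun hΘ (toLex ⟨s, l.castPred hl⟩)
  exact ⟨_, hll', hkl.trans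
    (inner_sub_eq_of_rho_eq (hc s l _ hll').ne (hρ.trans (hτ.trans hρ'.symm)))⟩

/-- for a product of full-dimensional simplices, the product
slope map `Θ` is injective on each fiber of `ω ↦ A^ω`. -/
theorem prod_slope_map_injective_on_fiber (t : ℕ) (ht : 1 ≤ t) (m : Fin t → ℕ)
    (hm : ∀ s : Fin t, 1 ≤ m s)
    (u : ∀ s : Fin t, Fin (m s + 1) → EuclideanSpace ℝ (Fin (m s)))
    (hu : ∀ s : Fin t, AffineIndependent ℝ (u s))
    (c : ∀ s : Fin t, EuclideanSpace ℝ (Fin (m s)))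
    (hc : ∀ s : Fin t, ∀ i j : Fin (m s + 1), i < j → ⟪c s, u s i⟫ < ⟪c s, u s j⟫)
    (ω ω' : ∀ s : Fin t, EuclideanSpace ℝ (Fin (m s)))
    (hω : ProdGeneric u c ω) (hω' : ProdGeneric u c ω')
    (A : (∀ s : Fin t, Fin (m s + 1)) → ∀ s : Fin t, Fin (m s + 1))
    (hA : ProdIsArbo u c ω A) (hA' : ProdIsArbo u c ω' A)
    (hΘ : prodTheta u c ω = prodTheta u c ω') :
    ω = ω' :=
  prod_slope_map_injective_on_fiber_general t m u hu c hc ω ω' A hA hA' hΘ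
end
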